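/- Let k be a field, d ≥ 1 an integer, and let K be a d-dimensional finite simplicial complex that is doubly Cohen–Macaulay over k. Then there exist minimal d-cycles c_1,…,c_m over k such that, with S_i the simplicial complex spanned by supp(c_i), one has K = S_1 ∪ ⋯ ∪ S_m and for every 1 < i ≤ m, the intersection S_i ∩ (S_1 ∪ ⋯ ∪ S_{i−1}) contains a face of dimension d (a set of cardinality d+1). -/

import Mathlib

/-!
Two facts about links of a doubly Cohen–Macaulay complex, each proved by induction on the
codimension, drive the decomposition. First, every facet lies in the support of a top-dimensional
cycle: a cycle of the link of `U ∪ {v}` is coned off at `v` and corrected by a chain of `K - v`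
that it bounds there (the `2`-CM condition), which gives a cycle of the link of `U` whose
contraction at `v` is the cycle we started from. Second, a set of facets that contains either all
or none of the support of every minimal cycle contains all facets or none: facets through a common
vertex `v` are handled in the link of `v`, to which contraction transfers the separation, and the
vanishing of `H̃₀` of the link joins any two vertices. Minimal cycles are then chosen greedily,
each meeting the facets covered so far and reaching a new one, until every facet is covered.
-/

namespace Paper2CM

variable {V : Type*} [Fintype V] [LinearOrder V]

/-- `sign(t,T) = (−1)^{|{s ∈ T : s < t}|}`. -/
def signOf (t : V) (T : Finset V) : ℤ := (-1) ^ (T.filter (fun s => s < t)).card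

/-- The simplicial boundary operator on formal chains with coefficients in an
abelian group `A`: `∂c(S) = Σ_{t ∉ S} sign(t, S ∪ {t}) • c(S ∪ {t})`. -/
def bdry {A : Type*} [AddCommGroup A] (c : Finset V → A) : Finset V → A :=
  fun S => ∑ t ∈ Sᶜ, signOf t (insert t S) • c (insert t S)

/-- A chain of degree `n - 1`, i.e. supported on sets of cardinality `n`. -/
def IsSimpChain {A : Type*} [AddCommGroup A] (n : ℕ) (c : Finset V → A) : Prop :=
  ∀ T, c T ≠ 0 → T.card = n

/-- `c'` is a subchain of `c`: each coefficient of `c'` agrees with that of `c` or is `0`. -/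
def Subchain {A : Type*} [AddCommGroup A] (c' c : Finset V → A) : Prop :=
  ∀ T, c' T = c T ∨ c' T = 0

/-- A minimal cycle supported on sets of cardinality `n` (so of dimension `n - 1`):
a nonzero cycle whose only subchains that are cycles are `0` and itself. -/
def IsMinimalCycle {A : Type*} [AddCommGroup A] (n : ℕ) (c : Finset V → A) : Prop :=
  c ≠ 0 ∧ IsSimpChain n c ∧ bdry c = 0 ∧
    ∀ c', Subchain c' c → bdry c' = 0 → c' = 0 ∨ c' = c

/-- The simplicial complex spanned by the support of a chain. -/
def spannedComplex {A : Type*} [AddCommGroup A] (c : Finset V → A) : Set (Finset V) :=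
  {S | ∃ T, c T ≠ 0 ∧ S ⊆ T}

/-- A (finite) simplicial complex on vertex type `V`: a collection of finite subsets
closed under taking subsets, containing the empty set. -/
def IsComplex (K : Set (Finset V)) : Prop :=
  ∅ ∈ K ∧ ∀ S ∈ K, ∀ T, T ⊆ S → T ∈ K

/-- The link of a face: `lk_L(T) = {S ∈ L : S ∩ T = ∅, S ∪ T ∈ L}`. -/
def cxLink (L : Set (Finset V)) (T : Finset V) : Set (Finset V) :=
  {S | S ∈ L ∧ Disjoint S T ∧ S ∪ T ∈ L}

/-- A pure complex: every face is contained in a face of maximal cardinality. -/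
def IsPure (L : Set (Finset V)) : Prop :=
  ∀ S ∈ L, ∃ F ∈ L, S ⊆ F ∧ ∀ G ∈ L, G.card ≤ F.card

/-- A chain of the complex `L` supported on faces of `L` of cardinality `n`. -/
def IsChainOn (k : Type*) [Field k] (L : Set (Finset V)) (n : ℕ) (c : Finset V → k) : Prop :=
  ∀ T, c T ≠ 0 → T ∈ L ∧ T.card = n

/-- Vanishing of the reduced homology `H̃_{n-1}(L; k)`: every cycle supported on
cardinality-`n` faces of `L` is the boundary of a chain on cardinality-`(n+1)` faces of `L`. -/
def HomologyVanishes (k : Type*) [Field k] (L : Set (Finset V)) (n : ℕ) : Prop :=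
  ∀ c : Finset V → k, IsChainOn k L n c → bdry c = 0 →
    ∃ b : Finset V → k, IsChainOn k L (n + 1) b ∧ bdry b = c

/-- Cohen–Macaulay over `k` via Reisner's criterion: `L` is pure and for every face
`T ∈ L` and every `i < dim lk_L(T)`, `H̃_i(lk_L(T); k) = 0` (here `i = n - 1`, and
`i < dim lk_L(T)` is expressed as: the link has a face of cardinality `> n`). -/
def IsCM (k : Type*) [Field k] (L : Set (Finset V)) : Prop :=
  IsPure L ∧ ∀ T ∈ L, ∀ n : ℕ, (∃ F ∈ cxLink L T, n < F.card) →
    HomologyVanishes k (cxLink L T) n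

/-- Doubly Cohen–Macaulay over `k`: `K` is CM and for every vertex `v` of `K`,
`K − v` is CM of the same dimension as `K` (same maximal cardinality of a face). -/
def Is2CM (k : Type*) [Field k] (K : Set (Finset V)) : Prop :=
  IsCM k K ∧ ∀ v : V, ({v} : Finset V) ∈ K →
    IsCM k {S | S ∈ K ∧ v ∉ S} ∧
    ∀ S ∈ K, ∃ F ∈ K, v ∉ F ∧ S.card ≤ F.card

set_option linter.unusedSectionVars false

open Finset

section Chains

variable {A : Type*} [AddCommGroup A]

theorem signOf_insert {t x : V} {T : Finset V} (hx : x ∉ T) :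
    signOf t (insert x T) = (if x < t then -1 else 1) * signOf t T := by
  unfold signOf
  rw [filter_insert]
  split_ifs with h
  · rw [card_insert_of_notMem fun hx' => hx (mem_filter.1 hx').1, pow_succ, mul_comm]
  · rw [one_mul]

theorem signOf_smul_signOf_smul (t : V) (T : Finset V) (a : A) :
    signOf t T • signOf t T • a = a := by
  rw [smul_smul, signOf, ← pow_add, Even.neg_one_pow ⟨_, rfl⟩, one_smul]

theorem signOf_smul_eq_zero {t : V} {T : Finset V} {a : A} : signOf t T • a = 0 ↔ a = 0 :=
  ⟨fun h => by rw [← signOf_smul_signOf_smul t T a, h, smul_zero], fun h => by rw [h, smul_zero]⟩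

theorem signOf_insert_comm {s t : V} {S : Finset V} (hst : s ≠ t) (hs : s ∉ S) (ht : t ∉ S) :
    signOf t (insert t S) * signOf s (insert s (insert t S)) =
      -(signOf s (insert s S) * signOf t (insert t (insert s S))) := by
  have hs' : s ∉ insert t S := by simp [hs, hst]
  have ht' : t ∉ insert s S := by simp [ht, hst.symm]
  rw [signOf_insert hs', signOf_insert ht', signOf_insert ht, signOf_insert hs,
    signOf_insert ht, signOf_insert hs]
  rcases hst.lt_or_gt with h | h
  · simp only [h, h.not_gt, lt_irrefl, if_true, if_false]; ring
  · simp only [h, h.not_gt, lt_irrefl, if_true, if_false]; ring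

theorem bdry_add (c c' : Finset V → A) : bdry (c + c') = bdry c + bdry c' := by
  funext S
  simp only [bdry, Pi.add_apply, smul_add, sum_add_distrib]

theorem bdry_sub (c c' : Finset V → A) : bdry (c - c') = bdry c - bdry c' := by
  funext S
  simp only [bdry, Pi.sub_apply, smul_sub, sum_sub_distrib]

theorem bdry_zero : bdry (0 : Finset V → A) = 0 := by
  funext S
  simp [bdry]

theorem bdry_bdry (c : Finset V → A) : bdry (bdry c) = 0 := by
  funext S
  simp only [bdry, smul_sum, smul_smul, Pi.zero_apply]
  rw [sum_sigma']
  refine sum_involution (fun p _ => ⟨p.2, p.1⟩) ?_ ?_ ?_ ?_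
  · rintro ⟨t, s⟩ h
    simp only [mem_sigma, mem_compl, mem_insert, not_or] at h
    dsimp only
    rw [signOf_insert_comm h.2.1 h.2.2 h.1, insert_comm s t, neg_smul, neg_add_cancel]
  · rintro ⟨t, s⟩ h _ heq
    simp only [mem_sigma, mem_compl, mem_insert, not_or] at h
    exact h.2.1 (congrArg Sigma.fst heq)
  · rintro ⟨t, s⟩ h
    simp only [mem_sigma, mem_compl, mem_insert, not_or] at h ⊢
    exact ⟨h.2.2, fun hts => h.2.1 hts.symm, h.1⟩
  · intro _ _
    rfl

theorem bdry_apply_empty (c : Finset V → A) : bdry c ∅ = ∑ x, c {x} := by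
  simp [bdry, signOf, filter_singleton]

theorem bdry_single_empty (a : A) :
    bdry (Pi.single (∅ : Finset V) a) = 0 := by
  funext S
  simp [bdry, insert_ne_empty]

theorem bdry_single_singleton (x : V) (a : A) :
    bdry (Pi.single ({x} : Finset V) a) = Pi.single ∅ a := by
  funext S
  by_cases hS : S = ∅
  · simp [hS, bdry_apply_empty, Pi.single_apply]
  · rw [Pi.single_apply, if_neg hS, bdry]
    refine sum_eq_zero fun t ht => ?_
    rw [Pi.single_apply, if_neg, smul_zero]
    intro h
    have h' := congrArg card h
    rw [card_insert_of_notMem (by simpa using ht), card_singleton] at h'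
    exact hS (card_eq_zero.1 (by omega))

end Chains

section Cone

variable {A : Type*} [AddCommGroup A]

def coneAt (v : V) (w : Finset V → A) : Finset V → A :=
  fun T => if v ∈ T then signOf v T • w (T.erase v) else 0

def contrAt (v : V) (z : Finset V → A) : Finset V → A :=
  fun G => if v ∈ G then 0 else signOf v (insert v G) • z (insert v G)

theorem contrAt_sub (v : V) (z z' : Finset V → A) :
    contrAt v (z - z') = contrAt v z - contrAt v z' := by
  funext G
  by_cases hG : v ∈ G <;> simp [contrAt, hG, smul_sub]

theorem contrAt_eq_zero {v : V} {z : Finset V → A} (hz : ∀ T, v ∈ T → z T = 0) :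
    contrAt v z = 0 := by
  funext G
  simp [contrAt, hz _ (mem_insert_self v G)]

theorem contrAt_coneAt {v : V} {w : Finset V → A} (hw : ∀ T, v ∈ T → w T = 0) :
    contrAt v (coneAt v w) = w := by
  funext G
  by_cases hG : v ∈ G
  · simp [contrAt, hG, hw G hG]
  · simp [contrAt, coneAt, hG, erase_insert hG, signOf_smul_signOf_smul]

theorem bdry_contrAt (v : V) (z : Finset V → A) : bdry (contrAt v z) = -contrAt v (bdry z) := by
  funext S
  by_cases hS : v ∈ S
  · simp [bdry, contrAt, hS]
  have hcompl : Sᶜ = insert v (insert v S)ᶜ := by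
    ext x; by_cases hx : x = v <;> simp [hx, hS]
  rw [bdry, hcompl, sum_insert (by simp)]
  simp only [contrAt, mem_insert_self, if_true, smul_zero, zero_add, hS, if_false, bdry,
    Pi.neg_apply, smul_sum, ← sum_neg_distrib]
  refine sum_congr rfl fun t ht => ?_
  simp only [mem_compl, mem_insert, not_or] at ht
  rw [if_neg (by simp [hS, Ne.symm ht.1]), smul_smul, smul_smul,
    signOf_insert_comm (Ne.symm ht.1) hS ht.2, insert_comm v t, neg_smul]

theorem bdry_coneAt {v : V} {w : Finset V → A} (hw : ∀ T, v ∈ T → w T = 0) (hcyc : bdry w = 0) :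
    bdry (coneAt v w) = w := by
  funext S
  by_cases hS : v ∈ S
  · have h := congrFun (bdry_contrAt v (coneAt v w)) (S.erase v)
    rw [contrAt_coneAt hw, hcyc] at h
    simp only [Pi.zero_apply, Pi.neg_apply, contrAt, notMem_erase, if_false, insert_erase hS,
      zero_eq_neg, signOf_smul_eq_zero] at h
    rw [h, hw S hS]
  · rw [bdry, sum_eq_single_of_mem v (by simpa using hS)]
    · simp [coneAt, erase_insert hS, signOf_smul_signOf_smul]
    · intro t _ htv
      simp [coneAt, Ne.symm htv, hS]

end Cone

section MinimalCycles

variable {A : Type*} [AddCommGroup A]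

open Classical in
noncomputable def supp (c : Finset V → A) : Finset (Finset V) := {T | c T ≠ 0}

theorem mem_supp {c : Finset V → A} {T : Finset V} : T ∈ supp c ↔ c T ≠ 0 := by
  simp [supp]

theorem Subchain.refl (c : Finset V → A) : Subchain c c := fun _ => Or.inl rfl

theorem Subchain.trans {c₁ c₂ c₃ : Finset V → A} (h₁₂ : Subchain c₁ c₂) (h₂₃ : Subchain c₂ c₃) :
    Subchain c₁ c₃ := by
  intro T
  rcases h₁₂ T with h | h
  · rw [h]; exact h₂₃ T
  · exact Or.inr h

theorem Subchain.sub {c' c : Finset V → A} (h : Subchain c' c) : Subchain (c - c') c := by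
  intro T
  rcases h T with h | h <;> simp [h]

theorem Subchain.eq_of_ne_zero {c' c : Finset V → A} (h : Subchain c' c) {T : Finset V}
    (hT : c' T ≠ 0) : c' T = c T :=
  (h T).resolve_right hT

theorem Subchain.isSimpChain {n : ℕ} {c' c : Finset V → A} (h : Subchain c' c)
    (hc : IsSimpChain n c) : IsSimpChain n c' :=
  fun T hT => hc T (h.eq_of_ne_zero hT ▸ hT)

theorem Subchain.supp_ssubset {c' c : Finset V → A} (h : Subchain c' c) (hne : c' ≠ c) :
    supp c' ⊂ supp c := by
  have hsub : supp c' ⊆ supp c := fun T hT => by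
    rw [mem_supp] at hT ⊢
    rwa [← h.eq_of_ne_zero hT]
  obtain ⟨T, hT⟩ := Function.ne_iff.1 hne
  have hc'T : c' T = 0 := (h T).resolve_left hT
  exact (ssubset_iff_of_subset hsub).2
    ⟨T, mem_supp.2 fun hcT => hT (hc'T.trans hcT.symm), by simp [mem_supp, hc'T]⟩

theorem exists_minimal_subcycle {n : ℕ} {z : Finset V → A} {F : Finset V} (hz : IsSimpChain n z)
    (hcyc : bdry z = 0) (hF : z F ≠ 0) :
    ∃ c, Subchain c z ∧ IsMinimalCycle n c ∧ c F ≠ 0 := by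
  induction h : (supp z).card using Nat.strong_induction_on generalizing z with
  | _ N ih =>
    by_cases hmin : ∀ c', Subchain c' z → bdry c' = 0 → c' = 0 ∨ c' = z
    · exact ⟨z, .refl z, ⟨fun h0 => hF (by simp [h0]), hz, hcyc, hmin⟩, hF⟩
    push Not at hmin
    obtain ⟨c', hc'z, hc'cyc, hc'0, hc'z'⟩ := hmin
    obtain ⟨y, hyz, hyne, hycyc, hyF⟩ : ∃ y, Subchain y z ∧ y ≠ z ∧ bdry y = 0 ∧ y F ≠ 0 := by
      by_cases hc'F : c' F = 0
      · exact ⟨z - c', hc'z.sub, by rwa [Ne, sub_eq_self], by rw [bdry_sub, hcyc, hc'cyc, sub_zero],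
          by simpa [hc'F]⟩
      · exact ⟨c', hc'z, hc'z', hc'cyc, hc'F⟩
    obtain ⟨c, hcy, hc, hcF⟩ :=
      ih _ (h ▸ card_lt_card (hyz.supp_ssubset hyne)) (hyz.isSimpChain hz) hycyc hyF rfl
    exact ⟨c, hcy.trans hyz, hc, hcF⟩

open Classical in
noncomputable def restrictTo (C : Set (Finset V)) (c : Finset V → A) : Finset V → A :=
  fun T => if T ∈ C then c T else 0

theorem restrictTo_add (C : Set (Finset V)) (c c' : Finset V → A) :
    restrictTo C (c + c') = restrictTo C c + restrictTo C c' := by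
  funext T
  by_cases hT : T ∈ C <;> simp [restrictTo, hT]

theorem restrictTo_subchain (C : Set (Finset V)) (c : Finset V → A) :
    Subchain (restrictTo C c) c := by
  intro T
  by_cases hT : T ∈ C <;> simp [restrictTo, hT]

theorem restrictTo_of_subset {C : Set (Finset V)} {c : Finset V → A}
    (h : ∀ T, c T ≠ 0 → T ∈ C) : restrictTo C c = c := by
  funext T
  by_cases hT : T ∈ C
  · simp [restrictTo, hT]
  · simpa [restrictTo, hT, eq_comm] using mt (h T) hT

theorem restrictTo_of_disjoint {C : Set (Finset V)} {c : Finset V → A}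
    (h : ∀ T, c T ≠ 0 → T ∉ C) : restrictTo C c = 0 := by
  funext T
  by_cases hT : T ∈ C
  · simpa [restrictTo, hT] using mt (h T) (not_not.2 hT)
  · simp [restrictTo, hT]

end MinimalCycles

def Separating (k : Type*) [Field k] (L : Set (Finset V)) (n : ℕ) (C : Set (Finset V)) : Prop :=
  ∀ c : Finset V → k, IsMinimalCycle n c → IsChainOn k L n c →
    (∀ T, c T ≠ 0 → T ∈ C) ∨ (∀ T, c T ≠ 0 → T ∉ C)

section Separating

variable {k : Type*} [Field k]

theorem IsChainOn.isSimpChain {L : Set (Finset V)} {n : ℕ} {c : Finset V → k}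
    (hc : IsChainOn k L n c) : IsSimpChain n c :=
  fun T hT => (hc T hT).2

theorem IsChainOn.mono {L L' : Set (Finset V)} {n : ℕ} {c : Finset V → k} (h : L ⊆ L')
    (hc : IsChainOn k L n c) : IsChainOn k L' n c :=
  fun T hT => ⟨h (hc T hT).1, (hc T hT).2⟩

theorem Subchain.isChainOn {L : Set (Finset V)} {n : ℕ} {c' c : Finset V → k} (h : Subchain c' c)
    (hc : IsChainOn k L n c) : IsChainOn k L n c' :=
  fun T hT => hc T (h.eq_of_ne_zero hT ▸ hT)

theorem Separating.bdry_restrictTo {L C : Set (Finset V)} {n : ℕ} (hC : Separating k L n C)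
    {z : Finset V → k} (hz : IsChainOn k L n z) (hcyc : bdry z = 0) :
    bdry (restrictTo C z) = 0 := by
  induction h : (supp z).card using Nat.strong_induction_on generalizing z with
  | _ N ih =>
    by_cases hz0 : z = 0
    · rw [hz0, restrictTo_of_disjoint (by simp), bdry_zero]
    obtain ⟨F, hF⟩ : ∃ F, z F ≠ 0 := Function.ne_iff.1 hz0
    obtain ⟨c, hcz, hc, -⟩ := exists_minimal_subcycle hz.isSimpChain hcyc hF
    have hzc : bdry (restrictTo C (z - c)) = 0 :=
      ih _ (h ▸ card_lt_card (hcz.sub.supp_ssubset (by rw [Ne, sub_eq_self]; exact hc.1)))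
        (hcz.sub.isChainOn hz) (by rw [bdry_sub, hcyc, hc.2.2.1, sub_zero]) rfl
    have hcC : bdry (restrictTo C c) = 0 := by
      rcases hC c hc (hcz.isChainOn hz) with hin | hout
      · rw [restrictTo_of_subset hin, hc.2.2.1]
      · rw [restrictTo_of_disjoint hout, bdry_zero]
    rw [← sub_add_cancel z c, restrictTo_add, bdry_add, hzc, hcC, add_zero]

end Separating

section Links

variable {K L : Set (Finset V)} {U T : Finset V} {v : V}

theorem cxLink_empty (K : Set (Finset V)) : cxLink K ∅ = K := by
  ext S
  simp [cxLink]

theorem cxLink_mono (h : K ⊆ L) (U : Finset V) : cxLink K U ⊆ cxLink L U :=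
  fun _ ⟨hS, hSU, hSUK⟩ => ⟨h hS, hSU, h hSUK⟩

theorem IsComplex.cxLink (hK : IsComplex K) (hU : U ∈ K) : IsComplex (cxLink K U) := by
  refine ⟨⟨hK.1, disjoint_empty_left U, by simpa using hU⟩, ?_⟩
  rintro S ⟨hSK, hSU, hSUK⟩ T hT
  exact ⟨hK.2 S hSK T hT, disjoint_of_subset_left hT hSU,
    hK.2 _ hSUK _ (union_subset_union hT le_rfl)⟩

theorem erase_union_insert (hv : v ∈ T) : T.erase v ∪ insert v U = T ∪ U := by
  rw [union_insert, ← insert_union, insert_erase hv]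

theorem erase_mem_cxLink_insert_iff (hK : IsComplex K) (hvU : v ∉ U) (hvT : v ∈ T) :
    T.erase v ∈ cxLink K (insert v U) ↔ T ∈ cxLink K U := by
  simp only [cxLink, Set.mem_ofPred_eq, erase_union_insert hvT, disjoint_insert_right,
    notMem_erase, not_false_eq_true, true_and]
  constructor
  · rintro ⟨-, hTU, hTUK⟩
    refine ⟨hK.2 _ hTUK _ subset_union_left, ?_, hTUK⟩
    rw [← insert_erase hvT, disjoint_insert_left]
    exact ⟨hvU, hTU⟩
  · rintro ⟨hTK, hTU, hTUK⟩
    exact ⟨hK.2 T hTK _ (erase_subset v T), disjoint_of_subset_left (erase_subset v T) hTU, hTUK⟩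

theorem cxLink_insert_subset (hK : IsComplex K) (hvU : v ∉ U) :
    cxLink K (insert v U) ⊆ cxLink {S | S ∈ K ∧ v ∉ S} U := by
  rintro S ⟨hSK, hSvU, hSvUK⟩
  rw [disjoint_insert_right] at hSvU
  have hSUK : S ∪ U ∈ K := hK.2 _ hSvUK _ (union_subset_union le_rfl (subset_insert v U))
  exact ⟨⟨hSK, hSvU.1⟩, hSvU.2, hSUK, by simp [hSvU.1, hvU]⟩

end Links

section Facets

variable {K : Set (Finset V)} {d : ℕ}

theorem exists_facet (hdim : (∀ S ∈ K, S.card ≤ d + 1) ∧ ∃ S ∈ K, S.card = d + 1)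
    (hpure : IsPure K) {S : Finset V} (hS : S ∈ K) : ∃ F ∈ K, S ⊆ F ∧ F.card = d + 1 := by
  obtain ⟨F, hF, hSF, hmax⟩ := hpure S hS
  obtain ⟨S₀, hS₀, hS₀card⟩ := hdim.2
  exact ⟨F, hF, hSF, le_antisymm (hdim.1 F hF) (hS₀card ▸ hmax S₀ hS₀)⟩

theorem exists_facet_cxLink (hK : IsComplex K)
    (hdim : (∀ S ∈ K, S.card ≤ d + 1) ∧ ∃ S ∈ K, S.card = d + 1) (hpure : IsPure K)
    {U S : Finset V} (hS : S ∈ cxLink K U) :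
    ∃ F ∈ cxLink K U, S ⊆ F ∧ F.card + U.card = d + 1 := by
  obtain ⟨-, hSU, hSUK⟩ := hS
  obtain ⟨F, hF, hSUF, hFcard⟩ := exists_facet hdim hpure hSUK
  have hUF : U ⊆ F := subset_union_right.trans hSUF
  refine ⟨F \ U, ⟨hK.2 F hF _ sdiff_subset, sdiff_disjoint, by rwa [sdiff_union_of_subset hUF]⟩,
    subset_sdiff.2 ⟨subset_union_left.trans hSUF, hSU⟩, ?_⟩
  rw [card_sdiff_of_subset hUF, Nat.sub_add_cancel (card_le_card hUF), hFcard]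

variable {k : Type*} [Field k]

theorem Is2CM.exists_facet_notMem (hdim : (∀ S ∈ K, S.card ≤ d + 1) ∧ ∃ S ∈ K, S.card = d + 1)
    (h2cm : Is2CM k K) {v : V} (hv : {v} ∈ K) {U : Finset V} (hU : U ∈ K) (hvU : v ∉ U) :
    ∃ F ∈ K, U ⊆ F ∧ v ∉ F ∧ F.card = d + 1 := by
  obtain ⟨⟨hpure, -⟩, hdimv⟩ := h2cm.2 v hv
  obtain ⟨F, ⟨hF, hvF⟩, hUF, hmax⟩ := hpure U ⟨hU, hvU⟩
  obtain ⟨S₀, hS₀, hS₀card⟩ := hdim.2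
  obtain ⟨F₀, hF₀, hvF₀, hle⟩ := hdimv S₀ hS₀
  exact ⟨F, hF, hUF, hvF, le_antisymm (hdim.1 F hF) (hS₀card ▸ hle.trans (hmax F₀ ⟨hF₀, hvF₀⟩))⟩

theorem Is2CM.homologyVanishes_cxLink_deleteVertex (hK : IsComplex K)
    (hdim : (∀ S ∈ K, S.card ≤ d + 1) ∧ ∃ S ∈ K, S.card = d + 1) (h2cm : Is2CM k K) {v : V}
    (hv : {v} ∈ K) {U : Finset V} (hU : U ∈ K) (hvU : v ∉ U) {m : ℕ} (hm : U.card + m = d) :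
    HomologyVanishes k (cxLink {S | S ∈ K ∧ v ∉ S} U) m := by
  obtain ⟨F, hF, hUF, hvF, hFcard⟩ := h2cm.exists_facet_notMem hdim hv hU hvU
  have hFU : F \ U ∈ cxLink {S | S ∈ K ∧ v ∉ S} U :=
    ⟨⟨hK.2 F hF _ sdiff_subset, fun h => hvF (mem_sdiff.1 h).1⟩, sdiff_disjoint,
      by rw [sdiff_union_of_subset hUF]; exact ⟨hF, hvF⟩⟩
  exact (h2cm.2 v hv).1.2 U ⟨hU, hvU⟩ m ⟨F \ U, hFU, by rw [card_sdiff_of_subset hUF]; omega⟩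

end Facets

section Cycles

variable {k : Type*} [Field k] {K : Set (Finset V)} {d : ℕ}

/-- Cone `w` off at `v` and correct by a chain of the link of `U` in `K - v` that `w` bounds
there. -/
theorem exists_cycle_contrAt_eq (hK : IsComplex K) {v : V} {U : Finset V} (hvU : v ∉ U) {m : ℕ}
    (hvan : HomologyVanishes k (cxLink {S | S ∈ K ∧ v ∉ S} U) m) {w : Finset V → k}
    (hw : IsChainOn k (cxLink K (insert v U)) m w) (hcyc : bdry w = 0) :
    ∃ z, IsChainOn k (cxLink K U) (m + 1) z ∧ bdry z = 0 ∧ contrAt v z = w := by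
  obtain ⟨b, hb, hbw⟩ := hvan w (hw.mono (cxLink_insert_subset hK hvU)) hcyc
  have hwv : ∀ T, v ∈ T → w T = 0 := fun T hvT => by
    by_contra hT
    exact disjoint_left.1 (hw T hT).1.2.1 hvT (mem_insert_self v U)
  have hbv : ∀ T, v ∈ T → b T = 0 := fun T hvT => by
    by_contra hT
    exact (hb T hT).1.1.2 hvT
  refine ⟨coneAt v w - b, fun T hT => ?_, by rw [bdry_sub, bdry_coneAt hwv hcyc, hbw, sub_self],
    by rw [contrAt_sub, contrAt_coneAt hwv, contrAt_eq_zero hbv, sub_zero]⟩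
  by_cases hvT : v ∈ T
  · have hwT : w (T.erase v) ≠ 0 := fun h => hT (by simp [coneAt, hvT, hbv T hvT, h])
    obtain ⟨hTL, hTcard⟩ := hw _ hwT
    refine ⟨(erase_mem_cxLink_insert_iff hK hvU hvT).1 hTL, ?_⟩
    rw [← hTcard, card_erase_of_mem hvT, Nat.sub_add_cancel (card_pos.2 ⟨v, hvT⟩)]
  · have hbT : b T ≠ 0 := by simpa [coneAt, hvT] using hT
    exact ⟨cxLink_mono (fun _ h => h.1) U (hb T hbT).1, (hb T hbT).2⟩

/-- The induction starts at the empty face of the link of a facet, carried by the cycle `[∅]`. -/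
theorem Is2CM.exists_cycle_cxLink (hK : IsComplex K)
    (hdim : (∀ S ∈ K, S.card ≤ d + 1) ∧ ∃ S ∈ K, S.card = d + 1) (h2cm : Is2CM k K) {m : ℕ}
    {U : Finset V} (hU : U ∈ K) (hUm : U.card + m = d + 1) {F : Finset V} (hF : F ∈ cxLink K U)
    (hFcard : F.card = m) :
    ∃ z : Finset V → k, IsChainOn k (cxLink K U) m z ∧ bdry z = 0 ∧ z F ≠ 0 := by
  induction m generalizing U F with
  | zero =>
    obtain rfl := card_eq_zero.1 hFcard
    refine ⟨Pi.single ∅ 1, fun T hT => ?_, bdry_single_empty 1, by simp⟩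
    obtain rfl : T = ∅ := by by_contra h; simp [h] at hT
    exact ⟨hF, rfl⟩
  | succ m ih =>
    obtain ⟨v, hvF⟩ := card_pos.1 (by omega : 0 < F.card)
    have hvU : v ∉ U := disjoint_left.1 hF.2.1 hvF
    have hFv := (erase_mem_cxLink_insert_iff hK hvU hvF).2 hF
    obtain ⟨w, hw, hwcyc, hwF⟩ := ih (hK.2 _ hFv.2.2 _ subset_union_right)
      (by rw [card_insert_of_notMem hvU]; omega) hFv (by rw [card_erase_of_mem hvF, hFcard]; rfl)
    have hvan := h2cm.homologyVanishes_cxLink_deleteVertex hK hdim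
      (hK.2 F hF.1 _ (singleton_subset_iff.2 hvF)) hU hvU (m := m) (by omega)
    obtain ⟨z, hz, hzcyc, hzw⟩ := exists_cycle_contrAt_eq hK hvU hvan hw hwcyc
    refine ⟨z, hz, hzcyc, fun hzF => hwF ?_⟩
    simp [← hzw, contrAt, insert_erase hvF, hzF]

end Cycles

section Connectivity

variable {k : Type*} [Field k]

def MinimalCycleConnected (k : Type*) [Field k] (L : Set (Finset V)) (n : ℕ) : Prop :=
  ∀ C, Separating k L n C → ∀ F ∈ L, ∀ F' ∈ L, F.card = n → F'.card = n → F ∈ C → F' ∈ C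

def pairChain (u u' : V) : Finset V → k := Pi.single {u} 1 - Pi.single {u'} 1

theorem bdry_pairChain (u u' : V) : bdry (pairChain u u' : Finset V → k) = 0 := by
  rw [pairChain, bdry_sub, bdry_single_singleton, bdry_single_singleton, sub_self]

theorem pairChain_isChainOn {L : Set (Finset V)} {u u' : V} (hu : {u} ∈ L) (hu' : {u'} ∈ L) :
    IsChainOn k L 1 (pairChain u u') := by
  intro T hT
  by_cases h : T = {u}
  · exact ⟨h ▸ hu, h ▸ card_singleton u⟩
  by_cases h' : T = {u'}
  · exact ⟨h' ▸ hu', h' ▸ card_singleton u'⟩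
  simp [pairChain, h, h'] at hT

open Classical in
theorem mem_of_bdry_eq_zero_of_apply_singleton {D : Set V} {u u' : V} {y : Finset V → k}
    (hy : bdry y = 0) (hyD : ∀ x, y {x} = if x ∈ D then pairChain u u' {x} else 0)
    (hu : u ∈ D) : u' ∈ D := by
  -- the augmentation `∂y(∅) = ∑ₓ y{x}` of a cycle vanishes
  have h := congrFun hy ∅
  simp only [bdry_apply_empty, hyD, pairChain, Pi.sub_apply, Pi.single_apply, singleton_inj,
    Pi.zero_apply] at h
  by_contra hu'
  have huu' : u ≠ u' := fun h => hu' (h ▸ hu)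
  rw [sum_eq_single u (fun x _ hxu => by by_cases hx : x = u' <;> simp [hxu, hx, hu']) (by simp)]
    at h
  simp [hu, huu'] at h

theorem minimalCycleConnected_one (L : Set (Finset V)) : MinimalCycleConnected k L 1 := by
  intro C hC F hF F' hF' hFcard hF'card hFC
  obtain ⟨u, rfl⟩ := card_eq_one.1 hFcard
  obtain ⟨u', rfl⟩ := card_eq_one.1 hF'card
  exact mem_of_bdry_eq_zero_of_apply_singleton (D := {x | {x} ∈ C})
    (hC.bdry_restrictTo (pairChain_isChainOn hF hF') (bdry_pairChain u u')) (fun x => rfl) hFC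

theorem HomologyVanishes.mem_of_forall_edge {L : Set (Finset V)} (hL : HomologyVanishes k L 1)
    {D : Set V} (hD : ∀ x y, {x, y} ∈ L → x ∈ D → y ∈ D) {u u' : V} (hu : {u} ∈ L)
    (hu' : {u'} ∈ L) (huD : u ∈ D) : u' ∈ D := by
  obtain ⟨b, hb, hbu⟩ := hL _ (pairChain_isChainOn hu hu') (bdry_pairChain u u')
  -- restricted to the edges inside `D`, `b` has boundary `[u] - [u']` on `D` and `0` off `D`
  refine mem_of_bdry_eq_zero_of_apply_singleton
    (bdry_bdry (restrictTo {T | ∀ y ∈ T, y ∈ D} b)) (fun x => ?_) huD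
  rw [← hbu]
  split_ifs with hx
  · refine sum_congr rfl fun t _ => congrArg _ ?_
    by_cases hbt : b (insert t {x}) = 0
    · simp [restrictTo, hbt]
    · have htD : t ∈ D := hD x t (pair_comm t x ▸ (hb _ hbt).1) hx
      simp [restrictTo, htD, hx]
  · refine sum_eq_zero fun t _ => ?_
    simp [restrictTo, hx]

end Connectivity

section Separation

variable {A : Type*} [AddCommGroup A]

theorem contrAt_restrictTo (v : V) (C : Set (Finset V)) (z : Finset V → A) :
    contrAt v (restrictTo C z) = restrictTo {T | insert v T ∈ C} (contrAt v z) := by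
  funext G
  by_cases hG : v ∈ G <;> by_cases hC : insert v G ∈ C <;> simp [contrAt, restrictTo, hG, hC]

variable {k : Type*} [Field k] {K : Set (Finset V)} {d : ℕ}

theorem Separating.cxLink_insert {C : Set (Finset V)} {U : Finset V} {v : V} {m : ℕ}
    (hK : IsComplex K) (hvU : v ∉ U) (hvan : HomologyVanishes k (cxLink {S | S ∈ K ∧ v ∉ S} U) m)
    (hC : Separating k (cxLink K U) (m + 1) C) :
    Separating k (cxLink K (insert v U)) m {T | insert v T ∈ C} := by
  intro w hw hwL
  obtain ⟨z, hz, hzcyc, rfl⟩ := exists_cycle_contrAt_eq hK hvU hvan hwL hw.2.2.1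
  have hcyc : bdry (restrictTo {T | insert v T ∈ C} (contrAt v z)) = 0 := by
    rw [← contrAt_restrictTo, bdry_contrAt, hC.bdry_restrictTo hz hzcyc,
      contrAt_eq_zero (z := 0) fun _ _ => rfl, neg_zero]
  rcases hw.2.2.2 _ (restrictTo_subchain _ _) hcyc with h | h
  · refine Or.inr fun T hT hTC => hT ?_
    simpa [restrictTo, hTC] using congrFun h T
  · refine Or.inl fun T hT => by_contra fun hTC => hT ?_
    simpa [restrictTo, hTC, eq_comm] using congrFun h T

theorem Separating.mem_of_mem_of_vertex_mem {C : Set (Finset V)} {U G G' : Finset V} {v : V}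
    {m : ℕ} (hK : IsComplex K) (hvU : v ∉ U)
    (hvan : HomologyVanishes k (cxLink {S | S ∈ K ∧ v ∉ S} U) (m + 1))
    (hconn : MinimalCycleConnected k (cxLink K (insert v U)) (m + 1))
    (hC : Separating k (cxLink K U) (m + 2) C) (hG : G ∈ cxLink K U) (hG' : G' ∈ cxLink K U)
    (hGcard : G.card = m + 2) (hG'card : G'.card = m + 2) (hvG : v ∈ G) (hvG' : v ∈ G')
    (hGC : G ∈ C) : G' ∈ C := by
  have h := hconn _ (hC.cxLink_insert hK hvU hvan) _ ((erase_mem_cxLink_insert_iff hK hvU hvG).2 hG)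
    _ ((erase_mem_cxLink_insert_iff hK hvU hvG').2 hG') (by rw [card_erase_of_mem hvG, hGcard]; rfl)
    (by rw [card_erase_of_mem hvG', hG'card]; rfl) (by simpa [insert_erase hvG] using hGC)
  simpa [insert_erase hvG'] using h

theorem Is2CM.minimalCycleConnected_cxLink (hK : IsComplex K)
    (hdim : (∀ S ∈ K, S.card ≤ d + 1) ∧ ∃ S ∈ K, S.card = d + 1) (h2cm : Is2CM k K) {m : ℕ}
    {U : Finset V} (hU : U ∈ K) (hUm : U.card + m = d) :
    MinimalCycleConnected k (cxLink K U) (m + 1) := by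
  induction m generalizing U with
  | zero => exact minimalCycleConnected_one _
  | succ m ih =>
    intro C hC F hF F' hF' hFcard hF'card hFC
    have hstep : ∀ v G G', G ∈ cxLink K U → G' ∈ cxLink K U → G.card = m + 2 →
        G'.card = m + 2 → v ∈ G → v ∈ G' → G ∈ C → G' ∈ C := by
      intro v G G' hG hG' hGcard hG'card hvG hvG'
      have hvU : v ∉ U := disjoint_left.1 hG.2.1 hvG
      have hvan := h2cm.homologyVanishes_cxLink_deleteVertex hK hdim
        (hK.2 G hG.1 _ (singleton_subset_iff.2 hvG)) hU hvU (m := m + 1) (by omega)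
      have hvUK : insert v U ∈ K :=
        hK.2 _ ((erase_mem_cxLink_insert_iff hK hvU hvG).2 hG).2.2 _ subset_union_right
      exact hC.mem_of_mem_of_vertex_mem hK hvU hvan
        (ih hvUK (by rw [card_insert_of_notMem hvU]; omega)) hG hG' hGcard hG'card hvG hvG'
    set D : Set V := {x | ∀ G ∈ cxLink K U, G.card = m + 2 → x ∈ G → G ∈ C}
    have hD : ∀ x y, {x, y} ∈ cxLink K U → x ∈ D → y ∈ D := by
      intro x y hxy hx G hG hGcard hyG
      obtain ⟨G₀, hG₀, hxyG₀, hG₀card⟩ := exists_facet_cxLink hK hdim h2cm.1.1 hxy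
      have hG₀card' : G₀.card = m + 2 := by omega
      exact hstep y G₀ G hG₀ hG hG₀card' hGcard (hxyG₀ (by simp)) hyG
        (hx G₀ hG₀ hG₀card' (hxyG₀ (by simp)))
    obtain ⟨u, huF⟩ := card_pos.1 (by omega : 0 < F.card)
    obtain ⟨u', hu'F'⟩ := card_pos.1 (by omega : 0 < F'.card)
    have hlk := hK.cxLink hU
    have hu'D : u' ∈ D := (h2cm.1.2 U hU 1 ⟨F, hF, by omega⟩).mem_of_forall_edge hD
      (hlk.2 F hF _ (singleton_subset_iff.2 huF)) (hlk.2 F' hF' _ (singleton_subset_iff.2 hu'F'))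
      fun G hG hGcard huG => hstep u F G hF hG hFcard hGcard huF huG hFC
    exact hu'D F' hF' hF'card hu'F'

end Separation

section Decomposition

variable {A : Type*} [AddCommGroup A]

def MeetsEarlier {m : ℕ} (c : Fin m → Finset V → A) : Prop :=
  ∀ i : Fin m, 0 < (i : ℕ) → ∃ F, c i F ≠ 0 ∧ ∃ j < i, c j F ≠ 0

theorem MeetsEarlier.snoc {m : ℕ} {c : Fin (m + 1) → Finset V → A} (hc : MeetsEarlier c)
    {z : Finset V → A} {F : Finset V} {j : Fin (m + 1)} (hzF : z F ≠ 0) (hjF : c j F ≠ 0) :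
    MeetsEarlier (Fin.snoc c z : Fin (m + 2) → Finset V → A) := by
  refine Fin.lastCases (fun _ => ⟨F, by simpa using hzF, j.castSucc, Fin.castSucc_lt_last j,
    by simpa using hjF⟩) (fun i hi => ?_)
  obtain ⟨G, hiG, l, hli, hlG⟩ := hc i (by simpa using hi)
  exact ⟨G, by simpa using hiG, l.castSucc, Fin.castSucc_lt_castSucc_iff.2 hli, by simpa using hlG⟩

open Classical in
noncomputable def uncovered (K : Set (Finset V)) (n : ℕ) {m : ℕ} (c : Fin m → Finset V → A) :
    Finset (Finset V) :=
  {F | F ∈ K ∧ F.card = n ∧ ∀ i, c i F = 0}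

theorem mem_uncovered {K : Set (Finset V)} {n m : ℕ} {c : Fin m → Finset V → A} {F : Finset V} :
    F ∈ uncovered K n c ↔ F ∈ K ∧ F.card = n ∧ ∀ i, c i F = 0 := by
  simp [uncovered]

theorem uncovered_snoc_ssubset {K : Set (Finset V)} {n m : ℕ} {c : Fin (m + 1) → Finset V → A}
    {z : Finset V → A} {F : Finset V} (hF : F ∈ uncovered K n c) (hzF : z F ≠ 0) :
    uncovered K n (Fin.snoc c z : Fin (m + 2) → Finset V → A) ⊂ uncovered K n c := by
  refine Finset.ssubset_iff_subset_ne.2 ⟨fun G hG => ?_, fun h => ?_⟩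
  · rw [mem_uncovered] at hG ⊢
    exact ⟨hG.1, hG.2.1, fun i => by simpa using hG.2.2 i.castSucc⟩
  · rw [← h, mem_uncovered] at hF
    exact hzF (by simpa using hF.2.2 (Fin.last _))

variable {k : Type*} [Field k] {K : Set (Finset V)} {n : ℕ}

theorem MinimalCycleConnected.exists_cover (hK : MinimalCycleConnected k K n) {m : ℕ}
    (c : Fin (m + 1) → Finset V → k) (hc : ∀ i, IsMinimalCycle n (c i) ∧ IsChainOn k K n (c i))
    (hmeet : MeetsEarlier c) :
    ∃ (M : ℕ) (c' : Fin (M + 1) → Finset V → k),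
      (∀ i, IsMinimalCycle n (c' i) ∧ IsChainOn k K n (c' i)) ∧ MeetsEarlier c' ∧
        ∀ F ∈ K, F.card = n → ∃ i, c' i F ≠ 0 := by
  induction h : (uncovered K n c).card using Nat.strong_induction_on generalizing m c with
  | _ N ih =>
    by_cases hcov : ∀ F ∈ K, F.card = n → ∃ i, c i F ≠ 0
    · exact ⟨m, c, hc, hmeet, hcov⟩
    push Not at hcov
    obtain ⟨F₁, hF₁K, hF₁n, hF₁⟩ := hcov
    by_cases hsep : Separating k K n {T | ∃ i, c i T ≠ 0}
    · obtain ⟨T, hT⟩ : ∃ T, c 0 T ≠ 0 := Function.ne_iff.1 (hc 0).1.1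
      obtain ⟨hTK, hTn⟩ := (hc 0).2 T hT
      obtain ⟨i, hi⟩ := hK _ hsep T hTK F₁ hF₁K hTn hF₁n ⟨0, hT⟩
      exact absurd (hF₁ i) hi
    simp only [Separating, not_forall, not_or] at hsep
    obtain ⟨z, hz, hzK, ⟨T₁, hzT₁, hT₁⟩, ⟨T₀, hzT₀, hT₀⟩⟩ := hsep
    obtain ⟨j, hj⟩ : ∃ j, c j T₀ ≠ 0 := not_not.1 hT₀
    have hT₁u : T₁ ∈ uncovered K n c :=
      mem_uncovered.2 ⟨(hzK T₁ hzT₁).1, (hzK T₁ hzT₁).2, by simpa using hT₁⟩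
    refine ih _ (h ▸ card_lt_card (uncovered_snoc_ssubset hT₁u hzT₁)) (Fin.snoc c z) (fun i => ?_)
      (hmeet.snoc hzT₀ hj) rfl
    induction i using Fin.lastCases with
    | last => simpa using ⟨hz, hzK⟩
    | cast i => simpa using hc i

end Decomposition

theorem eq_iUnion_spannedComplex {k : Type*} [Field k] {K : Set (Finset V)} {n : ℕ}
    {ι : Type*} (hK : IsComplex K) (hfacet : ∀ S ∈ K, ∃ F ∈ K, S ⊆ F ∧ F.card = n)
    {c : ι → Finset V → k} (hc : ∀ i, IsChainOn k K n (c i))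
    (hcov : ∀ F ∈ K, F.card = n → ∃ i, c i F ≠ 0) :
    K = ⋃ i, spannedComplex (c i) := by
  ext S
  simp only [Set.mem_iUnion, spannedComplex, Set.mem_ofPred_eq]
  constructor
  · intro hS
    obtain ⟨F, hF, hSF, hFn⟩ := hfacet S hS
    obtain ⟨i, hi⟩ := hcov F hF hFn
    exact ⟨i, F, hi, hSF⟩
  · rintro ⟨i, T, hT, hST⟩
    exact hK.2 T ((hc i) T hT).1 S hST

theorem decomposition_of_2CM_into_minimal_cycle_complexes_general
    {V : Type*} [Fintype V] [LinearOrder V] (k : Type*) [Field k]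
    (d : ℕ) (K : Set (Finset V))
    (hK : IsComplex K)
    (hdim : (∀ S ∈ K, S.card ≤ d + 1) ∧ ∃ S ∈ K, S.card = d + 1)
    (h2cm : Is2CM k K) :
    ∃ m : ℕ, 1 ≤ m ∧ ∃ c : Fin m → Finset V → k,
      (∀ i, IsMinimalCycle (d + 1) (c i)) ∧
      K = ⋃ i, spannedComplex (c i) ∧
      ∀ i : Fin m, 0 < (i : ℕ) →
        ∃ F : Finset V, F.card = d + 1 ∧
          F ∈ spannedComplex (c i) ∩ ⋃ j ∈ {j : Fin m | j < i}, spannedComplex (c j) := by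
  obtain ⟨F₀, hF₀K, hF₀card⟩ := hdim.2
  obtain ⟨z, hz, hzcyc, hzF₀⟩ := h2cm.exists_cycle_cxLink hK hdim hK.1 (by simp)
    (by rwa [cxLink_empty]) hF₀card
  rw [cxLink_empty] at hz
  obtain ⟨c₀, hc₀z, hc₀, -⟩ := exists_minimal_subcycle hz.isSimpChain hzcyc hzF₀
  have hconn := h2cm.minimalCycleConnected_cxLink hK hdim hK.1 (m := d) (by simp)
  rw [cxLink_empty] at hconn
  obtain ⟨M, c, hc, hmeet, hcov⟩ := hconn.exists_cover (m := 0) (fun _ => c₀)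
    (fun _ => ⟨hc₀, hc₀z.isChainOn hz⟩) (fun i hi => by have := i.isLt; omega)
  refine ⟨M + 1, by omega, c, fun i => (hc i).1,
    eq_iUnion_spannedComplex hK (fun _ hS => exists_facet hdim h2cm.1.1 hS) (fun i => (hc i).2)
      hcov, fun i hi => ?_⟩
  obtain ⟨F, hiF, j, hji, hjF⟩ := hmeet i hi
  exact ⟨F, (hc i).1.2.1 F hiF, ⟨F, hiF, subset_rfl⟩, Set.mem_biUnion hji ⟨F, hjF, subset_rfl⟩⟩

/-- **decomposition theorem.** Every `d`-dimensional doubly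
Cohen–Macaulay complex `K` over a field `k` (`d ≥ 1`) is a union
`K = S₁ ∪ ⋯ ∪ S_m` of minimal `d`-cycle complexes (spanned by supports of minimal
`d`-cycles, i.e. cycles on cardinality-`(d+1)` sets) such that for every `i > 1`,
`S_i ∩ (S₁ ∪ ⋯ ∪ S_{i−1})` contains a face of dimension `d`. -/
theorem decomposition_of_2CM_into_minimal_cycle_complexes
    {V : Type*} [Fintype V] [LinearOrder V] (k : Type*) [Field k]
    (d : ℕ) (hd : 1 ≤ d) (K : Set (Finset V))
    (hK : IsComplex K)
    (hdim : (∀ S ∈ K, S.card ≤ d + 1) ∧ ∃ S ∈ K, S.card = d + 1)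
    (h2cm : Is2CM k K) :
    ∃ m : ℕ, 1 ≤ m ∧ ∃ c : Fin m → Finset V → k,
      (∀ i, IsMinimalCycle (d + 1) (c i)) ∧
      K = ⋃ i, spannedComplex (c i) ∧
      ∀ i : Fin m, 0 < (i : ℕ) →
        ∃ F : Finset V, F.card = d + 1 ∧
          F ∈ spannedComplex (c i) ∩ ⋃ j ∈ {j : Fin m | j < i}, spannedComplex (c j) :=
  decomposition_of_2CM_into_minimal_cycle_complexes_general k d K hK hdim h2cm

end Paper2CM
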